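/- Let Λ: ℍ → ℂ be an ℝ-linear map determined by (z₂,z₃,z₄,z₅) ∈ ℂ⁴ via Λ(b+cj) = z₂c − z₃b + z₄·conj(b) + z₅·conj(c), with real 2×4 matrix L_Λ (for ℍ ≅ ℝ⁴, ℂ ≅ ℝ²). Then det(L_Λ · L_Λᵀ) = ν(Λ)² − 4|Δ(Λ)|², where ν(Λ) = |z₂|²+|z₃|²+|z₄|²+|z₅|² and Δ(Λ) = z₃z₄ − z₂z₅. In particular, for Λ ≠ 0, the real rank of Λ is 1 if and only if ν(Λ) = 2|Δ(Λ)| > 0. -/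

import Mathlib

/-!
Since `rank (L * Lᵀ) = rank L`, a nonzero real matrix `L` with two rows has rank one exactly when
the Gram determinant `det (L * Lᵀ)` vanishes. Expanding that determinant gives `ν² − 4|Δ|²`, and as
`ν > 0` for `Λ ≠ 0`, it vanishes iff `ν = 2|Δ|`, which then forces `|Δ| > 0`.
-/

/-- The real 2×4 matrix of Λ (for ℍ ≅ ℝ⁴, ℂ ≅ ℝ²), where
Λ(x+yi+uj+vk) = (−z₃+z₄)x − i(z₃+z₄)y + (z₂+z₅)u + i(z₂−z₅)v. -/
noncomputable def Lmat (z2 z3 z4 z5 : ℂ) : Matrix (Fin 2) (Fin 4) ℝ :=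
  !![(-z3 + z4).re, (-Complex.I * (z3 + z4)).re, (z2 + z5).re, (Complex.I * (z2 - z5)).re;
     (-z3 + z4).im, (-Complex.I * (z3 + z4)).im, (z2 + z5).im, (Complex.I * (z2 - z5)).im]

namespace Matrix

variable {m n K : Type*} [Fintype n] [Field K]

theorem rank_eq_zero_iff (A : Matrix m n K) : A.rank = 0 ↔ A = 0 := by
  classical
  rw [rank, Submodule.finrank_eq_zero, LinearMap.range_eq_bot, ← toLin'_apply',
    LinearEquiv.map_eq_zero_iff]

theorem rank_eq_card_iff_det_ne_zero [Fintype m] [DecidableEq m] (A : Matrix m m K) :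
    A.rank = Fintype.card m ↔ A.det ≠ 0 := by
  refine ⟨fun h => ?_, fun h => A.rank_of_isUnit ((isUnit_iff_isUnit_det A).2 h.isUnit)⟩
  have hrange : LinearMap.range A.mulVecLin = ⊤ :=
    Submodule.eq_top_of_finrank_eq (by rw [← rank, h, Module.finrank_fintype_fun_eq_card])
  have hunit : IsUnit A := mulVec_surjective_iff_isUnit.1 (LinearMap.range_eq_top.1 hrange)
  exact ((isUnit_iff_isUnit_det A).1 hunit).ne_zero

theorem rank_lt_card_height_iff_det_mul_transpose_eq_zero [LinearOrder K] [IsStrictOrderedRing K]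
    [Fintype m] [DecidableEq m] (A : Matrix m n K) :
    A.rank < Fintype.card m ↔ (A * Aᵀ).det = 0 := by
  rw [← rank_self_mul_transpose, lt_iff_le_and_ne, ne_eq, rank_eq_card_iff_det_ne_zero, not_not]
  exact and_iff_right (rank_le_card_height _)

theorem rank_eq_one_iff_det_mul_transpose_eq_zero [LinearOrder K] [IsStrictOrderedRing K]
    (A : Matrix (Fin 2) n K) (hA : A ≠ 0) :
    A.rank = 1 ↔ (A * Aᵀ).det = 0 := by
  rw [← rank_lt_card_height_iff_det_mul_transpose_eq_zero, Fintype.card_fin]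
  have := (rank_eq_zero_iff A).not.2 hA
  omega

end Matrix

theorem Lmat_eq_zero_iff (z2 z3 z4 z5 : ℂ) :
    Lmat z2 z3 z4 z5 = 0 ↔ z2 = 0 ∧ z3 = 0 ∧ z4 = 0 ∧ z5 = 0 := by
  constructor
  · intro h
    have e := fun i j => congrFun (congrFun h i) j
    simp only [Lmat, Fin.forall_fin_succ] at e
    simp [Complex.ext_iff] at e ⊢
    obtain ⟨⟨e00, e01, e02, e03⟩, e10, e11, e12, e13⟩ := e
    refine ⟨⟨?_, ?_⟩, ⟨?_, ?_⟩, ⟨?_, ?_⟩, ⟨?_, ?_⟩⟩ <;> linarith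
  · rintro ⟨rfl, rfl, rfl, rfl⟩
    ext i j
    fin_cases i <;> fin_cases j <;> simp [Lmat]

theorem det_Lmat_mul_transpose (z2 z3 z4 z5 : ℂ) :
    (Lmat z2 z3 z4 z5 * (Lmat z2 z3 z4 z5).transpose).det
      = (Complex.normSq z2 + Complex.normSq z3 + Complex.normSq z4 + Complex.normSq z5) ^ 2
        - 4 * Complex.normSq (z3 * z4 - z2 * z5) := by
  simp only [Matrix.det_fin_two, Matrix.mul_apply, Matrix.transpose_apply, Fin.sum_univ_four]
  simp [Lmat, Complex.normSq_apply]
  ring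

theorem sq_sub_four_mul_sq_eq_zero_iff {ν d : ℝ} (hν : 0 < ν) (hd : 0 ≤ d) :
    ν ^ 2 - 4 * d ^ 2 = 0 ↔ ν = 2 * d ∧ 0 < d := by
  refine ⟨fun h => ?_, fun ⟨h, _⟩ => by rw [h]; ring⟩
  have hνd : ν = 2 * d := by nlinarith
  exact ⟨hνd, by linarith⟩

/-- det(L_Λ L_Λᵀ) = ν(Λ)² − 4|Δ(Λ)|², and for Λ ≠ 0 the real rank of Λ is 1
iff ν(Λ) = 2|Δ(Λ)| > 0, where ν = Σ|zᵢ|² and Δ = z₃z₄ − z₂z₅. -/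
theorem stmt15 (z2 z3 z4 z5 : ℂ) :
    (Lmat z2 z3 z4 z5 * (Lmat z2 z3 z4 z5).transpose).det
      = (Complex.normSq z2 + Complex.normSq z3 + Complex.normSq z4
          + Complex.normSq z5) ^ 2
        - 4 * Complex.normSq (z3 * z4 - z2 * z5) ∧
    ((z2, z3, z4, z5) ≠ (0, 0, 0, 0) →
      ((Lmat z2 z3 z4 z5).rank = 1 ↔
        (Complex.normSq z2 + Complex.normSq z3 + Complex.normSq z4
            + Complex.normSq z5
          = 2 * ‖z3 * z4 - z2 * z5‖ ∧
        0 < ‖z3 * z4 - z2 * z5‖))) := by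
  refine ⟨det_Lmat_mul_transpose z2 z3 z4 z5, fun hz => ?_⟩
  have hz' : ¬(z2 = 0 ∧ z3 = 0 ∧ z4 = 0 ∧ z5 = 0) := by simpa using hz
  have hν : 0 < Complex.normSq z2 + Complex.normSq z3 + Complex.normSq z4 + Complex.normSq z5 := by
    simp only [not_and_or] at hz'
    rcases hz' with h | h | h | h <;>
      linarith [Complex.normSq_pos.2 h, Complex.normSq_nonneg z2, Complex.normSq_nonneg z3,
        Complex.normSq_nonneg z4, Complex.normSq_nonneg z5]
  rw [Matrix.rank_eq_one_iff_det_mul_transpose_eq_zero _ ((Lmat_eq_zero_iff ..).not.2 hz'),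
    det_Lmat_mul_transpose, ← Complex.sq_norm (z3 * z4 - z2 * z5)]
  exact sq_sub_four_mul_sq_eq_zero_iff hν (norm_nonneg _)
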